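/- arXiv:2104.14477 — 2 statements merged into one kernel-verified Lean document; each statement's English description precedes it below -/
import Mathlib

section
/- Let x, x*, x̄ be three pairwise distinct points in the Euclidean plane ℝ². Define u_ab = (b - a)/‖b - a‖ for distinct points a, b. Then the symmetrized sum S = ⟨u_{x,x*}, u_{x,x̄}⟩ + ⟨u_{x*,x̄}, u_{x*,x}⟩ + ⟨u_{x̄,x*}, u_{x̄,x}⟩ (the sum of the cosines of the three angles of the triangle with vertices x, x*, x̄) satisfies 1 ≤ S ≤ 3/2. -/
open scoped RealInnerProductSpace

lemma div_form_aux (a b c : ℝ) : b⁻¹ * (c⁻¹ * a) = a / (b * c) := by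
  rw [div_eq_mul_inv, mul_inv]; ring

lemma cos_sum_bounds (p q r t : ℝ) (hp : 0 < p) (hq : 0 < q) (hr : 0 < r)
    (ht1 : t ≤ p * q) (ht2 : -(p * q) ≤ t) (hr2 : r ^ 2 = p ^ 2 + q ^ 2 - 2 * t) :
    1 ≤ t / (p * q) + (p ^ 2 - t) / (r * p) + (q ^ 2 - t) / (r * q) ∧
    t / (p * q) + (p ^ 2 - t) / (r * p) + (q ^ 2 - t) / (r * q) ≤ 3 / 2 := by
  have ha : 0 ≤ p + q - r := by nlinarith
  have hb : 0 ≤ q + r - p := by nlinarith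
  have hc : 0 ≤ p + r - q := by nlinarith
  have ht : t = (p ^ 2 + q ^ 2 - r ^ 2) / 2 := by linarith
  subst ht
  have hp0 : p ≠ 0 := ne_of_gt hp
  have hq0 : q ≠ 0 := ne_of_gt hq
  have hr0 : r ≠ 0 := ne_of_gt hr
  have key1 : (p ^ 2 + q ^ 2 - r ^ 2) / 2 / (p * q) +
      (p ^ 2 - (p ^ 2 + q ^ 2 - r ^ 2) / 2) / (r * p) +
      (q ^ 2 - (p ^ 2 + q ^ 2 - r ^ 2) / 2) / (r * q) - 1 =
      ((p + q - r) * (q + r - p) * (p + r - q)) / (2 * (p * q * r)) := by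
    field_simp
    ring
  have key2 : 3 / 2 - ((p ^ 2 + q ^ 2 - r ^ 2) / 2 / (p * q) +
      (p ^ 2 - (p ^ 2 + q ^ 2 - r ^ 2) / 2) / (r * p) +
      (q ^ 2 - (p ^ 2 + q ^ 2 - r ^ 2) / 2) / (r * q)) =
      (p * q * r - (p + q - r) * (q + r - p) * (p + r - q)) / (2 * (p * q * r)) := by
    field_simp
    ring
  have hnum2 : 0 ≤ p * q * r - (p + q - r) * (q + r - p) * (p + r - q) := by
    nlinarith [mul_nonneg ha (sq_nonneg ((q + r - p) - (p + r - q))),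
      mul_nonneg hb (sq_nonneg ((p + q - r) - (p + r - q))),
      mul_nonneg hc (sq_nonneg ((p + q - r) - (q + r - p)))]
  constructor
  · nlinarith [div_nonneg (mul_nonneg (mul_nonneg ha hb) hc)
      (by positivity : (0:ℝ) ≤ 2 * (p * q * r))]
  · nlinarith [div_nonneg hnum2 (by positivity : (0:ℝ) ≤ 2 * (p * q * r))]

theorem sum_of_cosines_of_triangle_bounds
    (x xs xb : EuclideanSpace ℝ (Fin 2))
    (h1 : x ≠ xs) (h2 : xs ≠ xb) (h3 : x ≠ xb)
    (u : EuclideanSpace ℝ (Fin 2) → EuclideanSpace ℝ (Fin 2) → EuclideanSpace ℝ (Fin 2))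
    (hu : ∀ a b, u a b = ‖b - a‖⁻¹ • (b - a)) :
    1 ≤ ⟪u x xs, u x xb⟫ + ⟪u xs xb, u xs x⟫ + ⟪u xb xs, u xb x⟫ ∧
    ⟪u x xs, u x xb⟫ + ⟪u xs xb, u xs x⟫ + ⟪u xb xs, u xb x⟫ ≤ 3 / 2 := by
  have hA0 : xs - x ≠ 0 := sub_ne_zero.mpr (Ne.symm h1)
  have hB0 : xb - x ≠ 0 := sub_ne_zero.mpr (Ne.symm h3)
  have hBA0 : (xb - x) - (xs - x) ≠ 0 := by
    rw [sub_sub_sub_cancel_right]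
    exact sub_ne_zero.mpr (Ne.symm h2)
  have hp : 0 < ‖xs - x‖ := norm_pos_iff.mpr hA0
  have hq : 0 < ‖xb - x‖ := norm_pos_iff.mpr hB0
  have hr : 0 < ‖(xb - x) - (xs - x)‖ := norm_pos_iff.mpr hBA0
  have ht1 : ⟪xs - x, xb - x⟫ ≤ ‖xs - x‖ * ‖xb - x‖ := real_inner_le_norm _ _
  have ht2 : -(‖xs - x‖ * ‖xb - x‖) ≤ ⟪xs - x, xb - x⟫ :=
    neg_le_of_abs_le (abs_real_inner_le_norm _ _)
  have hr2 : ‖(xb - x) - (xs - x)‖ ^ 2 =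
      ‖xs - x‖ ^ 2 + ‖xb - x‖ ^ 2 - 2 * ⟪xs - x, xb - x⟫ := by
    have h := @norm_sub_sq_real (EuclideanSpace ℝ (Fin 2)) _ _ (xb - x) (xs - x)
    rw [real_inner_comm (xs - x) (xb - x)] at h
    linarith
  have hd1 : xb - xs = (xb - x) - (xs - x) := by abel
  have hd2 : x - xs = -(xs - x) := by abel
  have hd3 : xs - xb = -((xb - x) - (xs - x)) := by abel
  have hd4 : x - xb = -(xb - x) := by abel
  have e1 : ⟪u x xs, u x xb⟫ = ⟪xs - x, xb - x⟫ / (‖xs - x‖ * ‖xb - x‖) := by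
    rw [hu, hu, real_inner_smul_left, real_inner_smul_right, div_form_aux]
  have e2 : ⟪u xs xb, u xs x⟫ =
      (‖xs - x‖ ^ 2 - ⟪xs - x, xb - x⟫) / (‖(xb - x) - (xs - x)‖ * ‖xs - x‖) := by
    rw [hu, hu, hd1, hd2, norm_neg, real_inner_smul_left, real_inner_smul_right,
      inner_neg_right, inner_sub_left, real_inner_comm (xs - x) (xb - x),
      real_inner_self_eq_norm_sq, neg_sub, div_form_aux]
  have e3 : ⟪u xb xs, u xb x⟫ =
      (‖xb - x‖ ^ 2 - ⟪xs - x, xb - x⟫) / (‖(xb - x) - (xs - x)‖ * ‖xb - x‖) := by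
    rw [hu, hu, hd3, hd4, norm_neg, norm_neg, real_inner_smul_left, real_inner_smul_right,
      inner_neg_neg, inner_sub_left, real_inner_self_eq_norm_sq, div_form_aux]
  rw [e1, e2, e3]
  exact cos_sum_bounds _ _ _ _ hp hq hr ht1 ht2 hr2
end

section
/- The sum of the cosines of the three interior angles of any triangle in ℝ² attains its maximum value 3/2 exactly when the triangle is equilateral, i.e., if α + β + γ = π with α, β, γ ∈ (0, π), then cos α + cos β + cos γ ≤ 3/2, with equality iff α = β = γ = π/3. -/
theorem sum_cos_le_three_halves (α β γ : ℝ)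
    (hα : α ∈ Set.Ioo 0 Real.pi) (hβ : β ∈ Set.Ioo 0 Real.pi)
    (hγ : γ ∈ Set.Ioo 0 Real.pi) (hsum : α + β + γ = Real.pi) :
    Real.cos α + Real.cos β + Real.cos γ ≤ 3 / 2 ∧
    (Real.cos α + Real.cos β + Real.cos γ = 3 / 2 ↔
      α = Real.pi / 3 ∧ β = Real.pi / 3 ∧ γ = Real.pi / 3) := by
  have hca := Real.sin_sq_add_cos_sq α
  have hcb := Real.sin_sq_add_cos_sq β
  have hγ' : γ = Real.pi - (α + β) := by linarith
  have key : Real.cos α + Real.cos β + Real.cos γ =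
      3 / 2 - (((Real.cos α + Real.cos β - 1) ^ 2
        + (Real.sin α - Real.sin β) ^ 2) / 2) := by
    rw [hγ', Real.cos_pi_sub, Real.cos_add]
    nlinarith [hca, hcb]
  constructor
  · nlinarith [sq_nonneg (Real.cos α + Real.cos β - 1), sq_nonneg (Real.sin α - Real.sin β)]
  constructor
  · intro heq
    have h1 : Real.cos α + Real.cos β - 1 = 0 ∧ Real.sin α - Real.sin β = 0 := by
      constructor <;>
        nlinarith [sq_nonneg (Real.cos α + Real.cos β - 1), sq_nonneg (Real.sin α - Real.sin β)]
    obtain ⟨h2, h3⟩ := h1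
    have hs : Real.sin α = Real.sin β := by linarith
    have hcos2 : Real.cos α ^ 2 = Real.cos β ^ 2 := by nlinarith
    have hcc : Real.cos α = Real.cos β := by
      rcases sq_eq_sq_iff_eq_or_eq_neg.mp hcos2 with h | h
      · linarith
      · exfalso; nlinarith
    have hab : α = β := by
      have := Real.injOn_cos (Set.mem_Icc.mpr ⟨le_of_lt hα.1, le_of_lt hα.2⟩)
        (Set.mem_Icc.mpr ⟨le_of_lt hβ.1, le_of_lt hβ.2⟩) hcc
      exact this
    have hcahalf : Real.cos α = 1/2 := by rw [hab] at h2 ⊢; linarith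
    have hpi3 : α = Real.pi / 3 := by
      have : Real.cos α = Real.cos (Real.pi / 3) := by rw [Real.cos_pi_div_three]; linarith
      exact Real.injOn_cos (Set.mem_Icc.mpr ⟨le_of_lt hα.1, le_of_lt hα.2⟩)
        (Set.mem_Icc.mpr ⟨by positivity, by linarith [Real.pi_pos]⟩) this
    refine ⟨hpi3, by rw [← hab]; exact hpi3, by linarith⟩
  · rintro ⟨h1, h2, h3⟩
    rw [h1, h2, h3, Real.cos_pi_div_three]; norm_num
end
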